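/- Let d > 0, let V : ℝ² × ℝ → ℝ be 𝕃-periodic in its first variable with V(R_{2π/3}⁻¹ x, z) = V(x, z) for all (x,z), let W : ℝ → ℝ, and let u₁, u₂ : ℝ² × ℝ → ℂ be 𝕃-periodic in their first variable satisfying u_j(R_{2π/3}⁻¹ x, z) = ω^j e^{i(K − R_{2π/3}K)·x} u_j(x, z) for j = 1, 2 and all (x,z), where ω := e^{2πi/3}, with enough integrability for the integrals below to converge absolutely. For j, j' ∈ {1,2} define 𝕍_{jj'}(X) := e^{−i(JK)·X} (((V + W̃) u_j, u_{j'}))_d^{+−}(X), where (V + W̃)u_j denotes the function (x,z) ↦ (V(x,z) + W(z)) u_j(x,z). Then for all X ∈ ℝ²: 𝕍_{jj'}(R_{2π/3}⁻¹ X) = ω^{j'−j} 𝕍_{jj'}(X); in particular 𝕍_{11} and 𝕍_{22} are invariant under the rotation R_{2π/3}, while 𝕍_{12}(R_{2π/3}⁻¹X) = ω 𝕍_{12}(X) and 𝕍_{21}(R_{2π/3}⁻¹X) = ω̄ 𝕍_{21}(X). -/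

import Mathlib

noncomputable section

open MeasureTheory Real Complex

abbrev Pt : Type := ℝ × ℝ

/-- Euclidean dot product on ℝ². -/
def dot (v w : Pt) : ℝ := v.1 * w.1 + v.2 * w.2

/-- The matrix J acting by J(x₁,x₂) = (x₂, −x₁). -/
def Jmat (v : Pt) : Pt := (v.2, -v.1)

/-- Rotation of ℝ² by angle θ. -/
def rotA (θ : ℝ) (v : Pt) : Pt :=
  (Real.cos θ * v.1 - Real.sin θ * v.2, Real.sin θ * v.1 + Real.cos θ * v.2)

/-- Lattice vector a₁ = a₀(1/2, −√3/2). -/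
def av1 (a0 : ℝ) : Pt := (a0 / 2, -(Real.sqrt 3 * a0 / 2))

/-- Lattice vector a₂ = a₀(1/2, √3/2). -/
def av2 (a0 : ℝ) : Pt := (a0 / 2, Real.sqrt 3 * a0 / 2)

/-- The graphene lattice 𝕃 = ℤa₁ + ℤa₂. -/
def lat (a0 : ℝ) : AddSubgroup Pt := AddSubgroup.closure {av1 a0, av2 a0}

/-- The moiré lattice 𝕃_M = J𝕃. -/
def latM (a0 : ℝ) : AddSubgroup Pt := AddSubgroup.closure {Jmat (av1 a0), Jmat (av2 a0)}

/-- Dual basis vector a₁*. -/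
def as1 (a0 : ℝ) : Pt := (2 * π / a0, -(2 * π / (Real.sqrt 3 * a0)))

/-- Dual basis vector a₂*. -/
def as2 (a0 : ℝ) : Pt := (2 * π / a0, 2 * π / (Real.sqrt 3 * a0))

/-- The Dirac point K = (a₁* + a₂*)/3. -/
def Kpt (a0 : ℝ) : Pt := (3 : ℝ)⁻¹ • (as1 a0 + as2 a0)

/-- A dual lattice vector G = m₁a₁* + m₂a₂*. -/
def dualVec (a0 : ℝ) (m : ℤ × ℤ) : Pt := (m.1 : ℝ) • as1 a0 + (m.2 : ℝ) • as2 a0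

/-- 𝕃-periodicity in the first variable. -/
def LPeriodic (a0 : ℝ) (f : Pt → ℝ → ℂ) : Prop :=
  ∀ R ∈ lat a0, ∀ (x : Pt) (z : ℝ), f (x + R) z = f x z

/-- K-quasiperiodicity in the first variable. -/
def KQuasiperiodic (a0 : ℝ) (Φ : Pt → ℝ → ℂ) : Prop :=
  ∀ R ∈ lat a0, ∀ (x : Pt) (z : ℝ),
    Φ (x + R) z = Complex.exp (Complex.I * (dot (Kpt a0) R : ℂ)) * Φ x z

/-- ω = e^{2πi/3}. -/
def ωc : ℂ := Complex.exp (2 * Real.pi * Complex.I / 3)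

/-- The integrand of ((f,g))_d^{ηη'}(X). -/
def braFn (d η η' : ℝ) (f g : Pt → ℝ → ℂ) (X : Pt) (p : Pt × ℝ) : ℂ :=
  (starRingEnd ℂ) (f (p.1 - (η / 2) • Jmat X) (p.2 - η * d / 2)) *
    g (p.1 - (η' / 2) • Jmat X) (p.2 - η' * d / 2)

/-- ((f,g))_d^{ηη'}(X), the interlayer pairing. -/
def bra (d : ℝ) (Ω : Set Pt) (η η' : ℝ) (f g : Pt → ℝ → ℂ) (X : Pt) : ℂ :=
  ∫ p in Ω ×ˢ (Set.univ : Set ℝ), braFn d η η' f g X p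

/-!
Write `R` for the rotation by `-2π/3`. It preserves Lebesgue measure, maps the lattice `𝕃` onto
itself and commutes with `J`, so `RΩ` is again a fundamental domain. Since the integrand of
`((f, g))` is `𝕃`-periodic, the integral over `Ω × ℝ` equals the one over `RΩ × ℝ`, and the
substitution `x ↦ Rx` brings it back to `Ω × ℝ`. The invariance of `V` and the covariance of the
`u_j` then turn the integrand at `RX` into `conj(ω^j) ω^{j'} e^{i k·JX}`, `k = K - R_{2π/3}K`, times
the integrand at `X`. The phase `e^{i k·JX}` is cancelled by the prefactor, because
`JK·R⁻¹X - k·JX = JK·X`.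
-/

section Rotation

variable (θ : ℝ)

theorem rotA_add (v w : Pt) : rotA θ (v + w) = rotA θ v + rotA θ w := by
  simp only [rotA, Prod.fst_add, Prod.snd_add, Prod.mk_add_mk]
  congr 1 <;> ring

theorem rotA_sub (v w : Pt) : rotA θ (v - w) = rotA θ v - rotA θ w := by
  simp only [rotA, Prod.fst_sub, Prod.snd_sub, Prod.mk_sub_mk]
  congr 1 <;> ring

theorem rotA_smul (c : ℝ) (v : Pt) : rotA θ (c • v) = c • rotA θ v := by
  simp only [rotA, Prod.smul_fst, Prod.smul_snd, Prod.smul_mk, smul_eq_mul]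
  congr 1 <;> ring

theorem rotA_zero_angle (v : Pt) : rotA 0 v = v := by
  simp [rotA]

theorem rotA_rotA (α β : ℝ) (v : Pt) : rotA α (rotA β v) = rotA (α + β) v := by
  simp only [rotA, Real.cos_add, Real.sin_add]
  congr 1 <;> ring

theorem rotA_neg_rotA (v : Pt) : rotA (-θ) (rotA θ v) = v := by
  rw [rotA_rotA, neg_add_cancel, rotA_zero_angle]

theorem rotA_rotA_neg (v : Pt) : rotA θ (rotA (-θ) v) = v := by
  rw [rotA_rotA, add_neg_cancel, rotA_zero_angle]

def rotLinearEquiv : Pt ≃ₗ[ℝ] Pt where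
  toFun := rotA θ
  invFun := rotA (-θ)
  map_add' := rotA_add θ
  map_smul' := rotA_smul θ
  left_inv := rotA_neg_rotA θ
  right_inv := rotA_rotA_neg θ

theorem det_rotLinearEquiv : LinearMap.det (rotLinearEquiv θ : Pt →ₗ[ℝ] Pt) = 1 := by
  rw [← LinearMap.det_toMatrix (Module.Basis.finTwoProd ℝ), Matrix.det_fin_two]
  simp only [LinearMap.toMatrix_apply, Module.Basis.finTwoProd_zero, Module.Basis.finTwoProd_one,
    Module.Basis.coe_finTwoProd_repr, rotLinearEquiv, LinearMap.coe_mk, AddHom.coe_mk, rotA,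
    Matrix.cons_val_zero, Matrix.cons_val_one, Matrix.cons_val_fin_one]
  linear_combination Real.sin_sq_add_cos_sq θ

theorem measurePreserving_rotA : MeasurePreserving (rotA θ) := by
  have h := Measure.map_linearMap_addHaar_eq_smul_addHaar (volume : Measure Pt)
    (f := (rotLinearEquiv θ : Pt →ₗ[ℝ] Pt)) (by rw [det_rotLinearEquiv]; norm_num)
  rw [det_rotLinearEquiv, inv_one, abs_one, ENNReal.ofReal_one, one_smul] at h
  exact ⟨(rotLinearEquiv θ).toContinuousLinearEquiv.continuous.measurable, h⟩

theorem measurableEmbedding_rotA : MeasurableEmbedding (rotA θ) :=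
  (rotLinearEquiv θ).toContinuousLinearEquiv.toHomeomorph.measurableEmbedding

theorem Jmat_rotA (v : Pt) : Jmat (rotA θ v) = rotA θ (Jmat v) := by
  simp only [Jmat, rotA]
  congr 1 <;> ring

theorem dot_Jmat_rotA_neg_sub (K X : Pt) :
    dot (Jmat K) (rotA (-θ) X) - dot (K - rotA θ K) (Jmat X) = dot (Jmat K) X := by
  simp only [dot, Jmat, rotA, Prod.fst_sub, Prod.snd_sub, Real.cos_neg, Real.sin_neg]
  ring

end Rotation

section FundamentalDomain

variable {A B : Type*} [AddGroup A] [AddGroup B] [MeasurableSpace A] [MeasurableSpace B]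

def AddSubgroup.prodBotEquiv (L : AddSubgroup A) : L ≃ L.prod (⊥ : AddSubgroup B) where
  toFun g := ⟨((g : A), 0), AddSubgroup.mem_prod.mpr ⟨g.2, zero_mem _⟩⟩
  invFun g := ⟨(g : A × B).1, (AddSubgroup.mem_prod.mp g.2).1⟩
  left_inv _ := rfl
  right_inv g :=
    Subtype.ext (Prod.ext rfl (AddSubgroup.mem_bot.mp (AddSubgroup.mem_prod.mp g.2).2).symm)

theorem MeasureTheory.IsAddFundamentalDomain.prod_univ {L : AddSubgroup A} {s : Set A}
    {μ : Measure A} {ν : Measure B} [SFinite ν] (hs : IsAddFundamentalDomain L s μ) :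
    IsAddFundamentalDomain (L.prod (⊥ : AddSubgroup B)) (s ×ˢ Set.univ) (μ.prod ν) := by
  rw [Set.prod_univ]
  exact hs.preimage_of_equiv Measure.quasiMeasurePreserving_fst L.prodBotEquiv.bijective
    fun _ _ => rfl

end FundamentalDomain

theorem MeasureTheory.IsAddFundamentalDomain.image_rotA {L : AddSubgroup Pt} {s : Set Pt}
    (hs : IsAddFundamentalDomain L s volume) {θ : ℝ} (hL : ∀ v, rotA θ v ∈ L ↔ v ∈ L) :
    IsAddFundamentalDomain L (rotA θ '' s) volume := by
  have hL' (g : L) : rotA (-θ) g ∈ L := (hL _).1 (by rw [rotA_rotA_neg]; exact g.2)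
  refine hs.image_of_equiv (rotLinearEquiv θ).toEquiv
    (measurePreserving_rotA (-θ)).quasiMeasurePreserving
    ⟨fun g => ⟨rotA (-θ) g, hL' g⟩, fun g => ⟨rotA θ g, (hL g).2 g.2⟩,
      fun g => Subtype.ext (rotA_rotA_neg θ g), fun g => Subtype.ext (rotA_neg_rotA θ g)⟩
    fun g x => ?_
  change rotA θ (rotA (-θ) g + x) = g + rotA θ x
  rw [rotA_add, rotA_rotA_neg]

theorem setIntegral_prod_univ_eq_of_periodic {L : AddSubgroup Pt} [Countable L] {s t : Set Pt}
    (hs : IsAddFundamentalDomain L s volume) (ht : IsAddFundamentalDomain L t volume)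
    {F : Pt × ℝ → ℂ} (hF : ∀ R ∈ L, ∀ p : Pt × ℝ, F ((R, 0) + p) = F p) :
    ∫ p in s ×ˢ Set.univ, F p = ∫ p in t ×ˢ Set.univ, F p := by
  have : Countable (L.prod (⊥ : AddSubgroup ℝ)) := L.prodBotEquiv.surjective.countable
  rw [Measure.volume_eq_prod]
  refine hs.prod_univ.setIntegral_eq ht.prod_univ fun g p => ?_
  obtain ⟨g, rfl⟩ := L.prodBotEquiv.surjective g
  exact hF g g.2 p

section Pairing

variable {L : AddSubgroup Pt} {f g : Pt → ℝ → ℂ} (d η η' : ℝ)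

theorem braFn_add_of_periodic (hf : ∀ R ∈ L, ∀ x z, f (x + R) z = f x z)
    (hg : ∀ R ∈ L, ∀ x z, g (x + R) z = g x z) (Y : Pt) {R : Pt} (hR : R ∈ L) (p : Pt × ℝ) :
    braFn d η η' f g Y ((R, 0) + p) = braFn d η η' f g Y p := by
  have hshift (c : ℝ) : R + p.1 - c • Jmat Y = p.1 - c • Jmat Y + R := by abel
  simp only [braFn, Prod.fst_add, Prod.snd_add, zero_add, hshift, hf R hR, hg R hR]

theorem braFn_rotA {θ : ℝ} {cf cg : ℂ} {k : Pt}
    (hf : ∀ x z, f (rotA θ x) z = cf * exp (I * (dot k x : ℂ)) * f x z)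
    (hg : ∀ x z, g (rotA θ x) z = cg * exp (I * (dot k x : ℂ)) * g x z) (X : Pt) (p : Pt × ℝ) :
    braFn d η η' f g (rotA θ X) (rotA θ p.1, p.2) =
      starRingEnd ℂ cf * cg * exp (I * ((η - η') / 2 * dot k (Jmat X) : ℝ)) *
        braFn d η η' f g X p := by
  simp only [braFn, Jmat_rotA, ← rotA_smul, ← rotA_sub, hf, hg, map_mul, ← exp_conj,
    conj_I, conj_ofReal]
  have hphase : -(I * (dot k (p.1 - (η / 2) • Jmat X) : ℂ)) +
      I * (dot k (p.1 - (η' / 2) • Jmat X) : ℂ) = I * ((η - η') / 2 * dot k (Jmat X) : ℝ) := by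
    simp only [dot, Prod.fst_sub, Prod.snd_sub, Prod.smul_fst, Prod.smul_snd, smul_eq_mul]
    push_cast
    ring
  rw [← hphase, Complex.exp_add, neg_mul]
  ring

theorem bra_rotA [Countable L] {Ω : Set Pt} (hΩ : IsAddFundamentalDomain L Ω volume) {θ : ℝ}
    (hL : ∀ v, rotA θ v ∈ L ↔ v ∈ L)
    (hfL : ∀ R ∈ L, ∀ x z, f (x + R) z = f x z) (hgL : ∀ R ∈ L, ∀ x z, g (x + R) z = g x z)
    {cf cg : ℂ} {k : Pt}
    (hf : ∀ x z, f (rotA θ x) z = cf * exp (I * (dot k x : ℂ)) * f x z)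
    (hg : ∀ x z, g (rotA θ x) z = cg * exp (I * (dot k x : ℂ)) * g x z) (X : Pt) :
    bra d Ω η η' f g (rotA θ X) =
      starRingEnd ℂ cf * cg * exp (I * ((η - η') / 2 * dot k (Jmat X) : ℝ)) *
        bra d Ω η η' f g X := by
  have hT : MeasurePreserving (Prod.map (rotA θ) id : Pt × ℝ → Pt × ℝ) :=
    (measurePreserving_rotA θ).prod (MeasurePreserving.id volume)
  calc bra d Ω η η' f g (rotA θ X)
      = ∫ p in (rotA θ '' Ω) ×ˢ Set.univ, braFn d η η' f g (rotA θ X) p :=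
        setIntegral_prod_univ_eq_of_periodic hΩ (hΩ.image_rotA hL)
          fun R hR p => braFn_add_of_periodic d η η' hfL hgL _ hR p
    _ = ∫ p in Ω ×ˢ Set.univ, braFn d η η' f g (rotA θ X) (rotA θ p.1, p.2) := by
        have himage : (rotA θ '' Ω) ×ˢ (Set.univ : Set ℝ) =
            Prod.map (rotA θ) id '' (Ω ×ˢ Set.univ) := by
          rw [Set.prodMap_image_prod, Set.image_id]
        rw [himage,
          hT.setIntegral_image_emb ((measurableEmbedding_rotA θ).prodMap MeasurableEmbedding.id)]
        rfl
    _ = _ := by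
        simp only [braFn_rotA d η η' hf hg]
        exact integral_const_mul _ _

end Pairing

section GrapheneLattice

variable (a0 : ℝ)

instance : Countable (lat a0) := by
  have hrange : (lat a0 : Set Pt) = Set.range fun m : ℤ × ℤ => m.1 • av1 a0 + m.2 • av2 a0 := by
    ext v
    simp [lat, AddSubgroup.mem_closure_pair]
  exact (hrange ▸ Set.countable_range _ : (lat a0 : Set Pt).Countable).to_subtype

theorem Real.cos_two_pi_div_three : Real.cos (2 * π / 3) = -(1 / 2) := by
  rw [show 2 * π / 3 = π - π / 3 by ring, Real.cos_pi_sub, Real.cos_pi_div_three]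

theorem Real.sin_two_pi_div_three : Real.sin (2 * π / 3) = √3 / 2 := by
  rw [show 2 * π / 3 = π - π / 3 by ring, Real.sin_pi_sub, Real.sin_pi_div_three]

theorem rotA_mem_lat {θ : ℝ} (h1 : rotA θ (av1 a0) ∈ lat a0) (h2 : rotA θ (av2 a0) ∈ lat a0)
    {v : Pt} (hv : v ∈ lat a0) : rotA θ v ∈ lat a0 := by
  have hle : lat a0 ≤ (lat a0).comap (rotLinearEquiv θ).toLinearMap.toAddMonoidHom :=
    (AddSubgroup.closure_le _).2 (Set.insert_subset_iff.2 ⟨h1, Set.singleton_subset_iff.2 h2⟩)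
  exact hle hv

theorem av1_mem_lat : av1 a0 ∈ lat a0 := AddSubgroup.subset_closure (by simp)

theorem av2_mem_lat : av2 a0 ∈ lat a0 := AddSubgroup.subset_closure (by simp)

theorem rotA_neg_two_pi_div_three_mem_lat {v : Pt} (hv : v ∈ lat a0) :
    rotA (-(2 * π / 3)) v ∈ lat a0 := by
  have hsq : √3 * √3 = 3 := Real.mul_self_sqrt (by norm_num)
  refine rotA_mem_lat a0 ?_ ?_ hv
  · convert neg_mem (add_mem (av1_mem_lat a0) (av2_mem_lat a0)) using 1
    simp only [rotA, av1, av2, Real.cos_neg, Real.sin_neg, Real.cos_two_pi_div_three,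
      Real.sin_two_pi_div_three, Prod.mk_add_mk, Prod.neg_mk]
    ext
    · linear_combination -(a0 / 4) * hsq
    · ring
  · convert av1_mem_lat a0 using 1
    simp only [rotA, av1, av2, Real.cos_neg, Real.sin_neg, Real.cos_two_pi_div_three,
      Real.sin_two_pi_div_three]
    ext
    · linear_combination a0 / 4 * hsq
    · ring

theorem rotA_neg_two_pi_div_three_mem_lat_iff (v : Pt) :
    rotA (-(2 * π / 3)) v ∈ lat a0 ↔ v ∈ lat a0 := by
  refine ⟨fun hv => ?_, rotA_neg_two_pi_div_three_mem_lat a0⟩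
  have hcube : rotA (-(2 * π / 3)) (rotA (-(2 * π / 3)) (rotA (-(2 * π / 3)) v)) = v := by
    rw [rotA_rotA, rotA_rotA, show -(2 * π / 3) + -(2 * π / 3) + -(2 * π / 3) = -(2 * π) by ring]
    simp [rotA]
  rw [← hcube]
  exact rotA_neg_two_pi_div_three_mem_lat a0 (rotA_neg_two_pi_div_three_mem_lat a0 hv)

end GrapheneLattice

theorem conj_ωc : starRingEnd ℂ ωc = ωc⁻¹ := by
  rw [ωc, ← Complex.exp_conj, ← Complex.exp_neg]
  congr 1
  simp only [map_div₀, map_mul, conj_I, conj_ofReal, map_ofNat]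
  ring

theorem conj_ωc_zpow_mul_zpow (j j' : ℤ) : starRingEnd ℂ (ωc ^ j) * ωc ^ j' = ωc ^ (j' - j) := by
  have hω : ωc ≠ 0 := Complex.exp_ne_zero _
  rw [map_zpow₀, conj_ωc, inv_zpow', ← zpow_add₀ hω, neg_add_eq_sub]

theorem stmt17_general (a0 d : ℝ) (Ω : Set Pt)
    (hΩ : IsAddFundamentalDomain (lat a0) Ω volume)
    (V : Pt → ℝ → ℝ) (W : ℝ → ℝ) (u : ℤ → Pt → ℝ → ℂ)
    (hVper : ∀ R ∈ lat a0, ∀ (x : Pt) (z : ℝ), V (x + R) z = V x z)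
    (hVrot : ∀ (x : Pt) (z : ℝ), V (rotA (-(2 * π / 3)) x) z = V x z)
    (huper : ∀ j ∈ ({1, 2} : Set ℤ), LPeriodic a0 (u j))
    (hurot : ∀ j ∈ ({1, 2} : Set ℤ), ∀ (x : Pt) (z : ℝ),
      u j (rotA (-(2 * π / 3)) x) z =
        ωc ^ j * Complex.exp (Complex.I *
          (dot (Kpt a0 - rotA (2 * π / 3) (Kpt a0)) x : ℂ)) * u j x z)
    (𝕍 : ℤ → ℤ → Pt → ℂ)
    (h𝕍 : ∀ (j j' : ℤ) (X : Pt), 𝕍 j j' X =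
      Complex.exp (-Complex.I * (dot (Jmat (Kpt a0)) X : ℂ)) *
        bra d Ω 1 (-1) (fun x z => ((V x z + W z : ℝ) : ℂ) * u j x z) (u j') X) :
    (∀ j ∈ ({1, 2} : Set ℤ), ∀ j' ∈ ({1, 2} : Set ℤ), ∀ X : Pt,
      𝕍 j j' (rotA (-(2 * π / 3)) X) = ωc ^ (j' - j) * 𝕍 j j' X) ∧
    (∀ X : Pt, 𝕍 1 1 (rotA (-(2 * π / 3)) X) = 𝕍 1 1 X) ∧
    (∀ X : Pt, 𝕍 2 2 (rotA (-(2 * π / 3)) X) = 𝕍 2 2 X) ∧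
    (∀ X : Pt, 𝕍 1 2 (rotA (-(2 * π / 3)) X) = ωc * 𝕍 1 2 X) ∧
    (∀ X : Pt, 𝕍 2 1 (rotA (-(2 * π / 3)) X) = (starRingEnd ℂ) ωc * 𝕍 2 1 X) := by
  have hcov : ∀ j ∈ ({1, 2} : Set ℤ), ∀ j' ∈ ({1, 2} : Set ℤ), ∀ X : Pt,
      𝕍 j j' (rotA (-(2 * π / 3)) X) = ωc ^ (j' - j) * 𝕍 j j' X := by
    intro j hj j' hj' X
    have hVu_rot (x : Pt) (z : ℝ) :
        ((V (rotA (-(2 * π / 3)) x) z + W z : ℝ) : ℂ) * u j (rotA (-(2 * π / 3)) x) z =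
          ωc ^ j * Complex.exp (Complex.I * (dot (Kpt a0 - rotA (2 * π / 3) (Kpt a0)) x : ℂ)) *
            (((V x z + W z : ℝ) : ℂ) * u j x z) := by
      rw [hVrot, hurot j hj]
      ring
    have hphase : Complex.exp (-I * (dot (Jmat (Kpt a0)) (rotA (-(2 * π / 3)) X) : ℂ)) *
        Complex.exp (I * ((1 - -1) / 2 * dot (Kpt a0 - rotA (2 * π / 3) (Kpt a0)) (Jmat X) : ℝ)) =
        Complex.exp (-I * (dot (Jmat (Kpt a0)) X : ℂ)) := by
      rw [← Complex.exp_add, ← dot_Jmat_rotA_neg_sub (2 * π / 3) (Kpt a0) X]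
      push_cast
      ring_nf
    rw [h𝕍, h𝕍, bra_rotA d 1 (-1) hΩ (rotA_neg_two_pi_div_three_mem_lat_iff a0)
      (fun R hR x z => by rw [hVper R hR, huper j hj R hR x z]) (huper j' hj') hVu_rot
      (hurot j' hj'), ← conj_ωc_zpow_mul_zpow, ← hphase]
    ring
  refine ⟨hcov, fun X => ?_, fun X => ?_, fun X => ?_, fun X => ?_⟩
  · simpa using hcov 1 (by simp) 1 (by simp) X
  · simpa using hcov 2 (by simp) 2 (by simp) X
  · simpa using hcov 1 (by simp) 2 (by simp) X
  · rw [hcov 2 (by simp) 1 (by simp) X, conj_ωc]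
    norm_num

/-- rotation covariance of the interlayer potential matrix
𝕍_{jj'}(X) := e^{−i(JK)·X} (((V + W̃)u_j, u_{j'}))_d^{+−}(X):
𝕍_{jj'}(R_{2π/3}⁻¹X) = ω^{j'−j} 𝕍_{jj'}(X). -/
theorem stmt17 (a0 d : ℝ) (ha0 : 0 < a0) (hd : 0 < d) (Ω : Set Pt)
    (hΩ : IsAddFundamentalDomain (lat a0) Ω volume)
    (V : Pt → ℝ → ℝ) (W : ℝ → ℝ) (u : ℤ → Pt → ℝ → ℂ)
    (hVper : ∀ R ∈ lat a0, ∀ (x : Pt) (z : ℝ), V (x + R) z = V x z)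
    (hVrot : ∀ (x : Pt) (z : ℝ), V (rotA (-(2 * π / 3)) x) z = V x z)
    (huper : ∀ j ∈ ({1, 2} : Set ℤ), LPeriodic a0 (u j))
    (hurot : ∀ j ∈ ({1, 2} : Set ℤ), ∀ (x : Pt) (z : ℝ),
      u j (rotA (-(2 * π / 3)) x) z =
        ωc ^ j * Complex.exp (Complex.I *
          (dot (Kpt a0 - rotA (2 * π / 3) (Kpt a0)) x : ℂ)) * u j x z)
    (hint : ∀ j ∈ ({1, 2} : Set ℤ), ∀ j' ∈ ({1, 2} : Set ℤ), ∀ X : Pt,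
      IntegrableOn
        (braFn d 1 (-1) (fun x z => ((V x z + W z : ℝ) : ℂ) * u j x z) (u j') X)
        (Ω ×ˢ (Set.univ : Set ℝ)) volume)
    (𝕍 : ℤ → ℤ → Pt → ℂ)
    (h𝕍 : ∀ (j j' : ℤ) (X : Pt), 𝕍 j j' X =
      Complex.exp (-Complex.I * (dot (Jmat (Kpt a0)) X : ℂ)) *
        bra d Ω 1 (-1) (fun x z => ((V x z + W z : ℝ) : ℂ) * u j x z) (u j') X) :
    (∀ j ∈ ({1, 2} : Set ℤ), ∀ j' ∈ ({1, 2} : Set ℤ), ∀ X : Pt,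
      𝕍 j j' (rotA (-(2 * π / 3)) X) = ωc ^ (j' - j) * 𝕍 j j' X) ∧
    (∀ X : Pt, 𝕍 1 1 (rotA (-(2 * π / 3)) X) = 𝕍 1 1 X) ∧
    (∀ X : Pt, 𝕍 2 2 (rotA (-(2 * π / 3)) X) = 𝕍 2 2 X) ∧
    (∀ X : Pt, 𝕍 1 2 (rotA (-(2 * π / 3)) X) = ωc * 𝕍 1 2 X) ∧
    (∀ X : Pt, 𝕍 2 1 (rotA (-(2 * π / 3)) X) = (starRingEnd ℂ) ωc * 𝕍 2 1 X) :=
  stmt17_general a0 d Ω hΩ V W u hVper hVrot huper hurot 𝕍 h𝕍
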